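/- There exists an absolute constant C such that for every n ∈ ℤ, every f ∈ L¹(ℝ) and every λ > 0, the Lebesgue measure of {x ∈ ℝ : M̃^n f(x) > λ} is at most C log₂(2+|n|) times the Lebesgue measure of {x ∈ ℝ : Mf(x) > λ}, where M is the uncentered Hardy–Littlewood maximal operator Mf(x) := sup_{I ∋ x, I a bounded interval} |I|^{−1} ∫_I |f(y)| dy. -/

import Mathlib

open MeasureTheory Set
open scoped ENNReal NNReal

noncomputable section

/-- The sharp shifted dyadic maximal operator
`M̃^n f(x) = sup_{I dyadic, x ∈ I} |I|⁻¹ ∫_{I^n} |f(y)| dy`, where the dyadic interval of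
scale `k` and position `m` is `[2^k m, 2^k(m+1))` and `I^n = I + n|I| = [2^k(m+n), 2^k(m+n+1))`. -/
def sharpShiftedMax (n : ℤ) (f : ℝ → ℂ) (x : ℝ) : ℝ≥0∞ :=
  ⨆ (k : ℤ) (m : ℤ) (_ : x ∈ Set.Ico ((2:ℝ)^k * m) ((2:ℝ)^k * (m + 1))),
    ENNReal.ofReal ((2:ℝ)^(-k)) *
      ∫⁻ y in Set.Ico ((2:ℝ)^k * (m + n)) ((2:ℝ)^k * (m + n + 1)), (‖f y‖₊ : ℝ≥0∞)

/-- The uncentered Hardy–Littlewood maximal operator over bounded intervals,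
`Mf(x) = sup_{I ∋ x} |I|⁻¹ ∫_I |f(y)| dy`. -/
def hlMax (f : ℝ → ℂ) (x : ℝ) : ℝ≥0∞ :=
  ⨆ (a : ℝ) (b : ℝ) (_ : a < b) (_ : x ∈ Set.Icc a b),
    ENNReal.ofReal ((b - a)⁻¹) * ∫⁻ y in Set.Icc a b, (‖f y‖₊ : ℝ≥0∞)


namespace Stmt7

def c (k m : ℤ) : ℝ := (2:ℝ)^k * m

lemma two_zpow_pos (k : ℤ) : (0:ℝ) < (2:ℝ)^k := zpow_pos (by norm_num) k

lemma c_le (k : ℤ) {m m' : ℤ} (h : m ≤ m') : c k m ≤ c k m' :=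
  mul_le_mul_of_nonneg_left (by exact_mod_cast h) (two_zpow_pos k).le

lemma c_lt (k : ℤ) {m m' : ℤ} (h : m < m') : c k m < c k m' :=
  mul_lt_mul_of_pos_left (by exact_mod_cast h) (two_zpow_pos k)

lemma c_succ (k j : ℤ) : c (k+1) j = c k (2*j) := by
  unfold c
  rw [zpow_add_one₀ (by norm_num : (2:ℝ) ≠ 0)]
  push_cast; ring

lemma c_sub (k m m' : ℤ) : c k m - c k m' = ((m - m' : ℤ) : ℝ) * (2:ℝ)^k := by
  unfold c; push_cast; ring

def dy (p : ℤ × ℤ) : Set ℝ := Ico (c p.1 p.2) (c p.1 (p.2+1))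

lemma dy_nonempty (p : ℤ × ℤ) : (dy p).Nonempty := nonempty_Ico.2 (c_lt _ (by omega))

lemma volume_dy (p : ℤ × ℤ) : volume (dy p) = ENNReal.ofReal ((2:ℝ)^p.1) := by
  rw [dy, Real.volume_Ico]
  congr 1
  rw [c_sub]; push_cast; ring

def par (p : ℤ × ℤ) : ℤ × ℤ := (p.1 + 1, p.2 / 2)

lemma dy_subset_par (p : ℤ × ℤ) : dy p ⊆ dy (par p) := by
  rcases p with ⟨k, m⟩
  apply Ico_subset_Ico
  · show c (k+1) (m/2) ≤ c k m
    rw [c_succ]; exact c_le k (by omega)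
  · show c k (m+1) ≤ c (k+1) (m/2 + 1)
    rw [c_succ]; exact c_le k (by omega)

def anc : ℕ → ℤ × ℤ → ℤ × ℤ
  | 0, p => p
  | s+1, p => par (anc s p)

lemma anc_fst (s : ℕ) (p : ℤ × ℤ) : (anc s p).1 = p.1 + s := by
  induction s with
  | zero => simp [anc]
  | succ s ih => simp only [anc, par, ih]; push_cast; ring

lemma dy_subset_anc (s : ℕ) (p : ℤ × ℤ) : dy p ⊆ dy (anc s p) := by
  induction s with
  | zero => exact subset_rfl
  | succ s ih => exact ih.trans (dy_subset_par _)

lemma same_scale_eq {k m m' : ℤ} (h : (dy (k,m) ∩ dy (k,m')).Nonempty) : m = m' := by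
  obtain ⟨x, hx1, hx2⟩ := h
  have h1 : c k m < c k (m'+1) := lt_of_le_of_lt hx1.1 hx2.2
  have h2 : c k m' < c k (m+1) := lt_of_le_of_lt hx2.1 hx1.2
  have e1 : m < m'+1 := by by_contra hcon; exact absurd h1 (not_lt.2 (c_le k (by omega)))
  have e2 : m' < m+1 := by by_contra hcon; exact absurd h2 (not_lt.2 (c_le k (by omega)))
  omega

lemma nested {p p' : ℤ × ℤ} (hk : p.1 ≤ p'.1) (h : (dy p ∩ dy p').Nonempty) :
    dy p ⊆ dy p' := by
  set d : ℕ := (p'.1 - p.1).toNat with hd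
  have hk' : (anc d p).1 = p'.1 := by rw [anc_fst]; omega
  have hq : anc d p = (p'.1, (anc d p).2) := by
    rw [← hk']
  have hsub : dy p ⊆ dy (anc d p) := dy_subset_anc d p
  obtain ⟨x, hx1, hx2⟩ := h
  have heq : (anc d p).2 = p'.2 := by
    have : (dy (p'.1, (anc d p).2) ∩ dy (p'.1, p'.2)).Nonempty := by
      refine ⟨x, ?_, ?_⟩
      · rw [← hq]; exact hsub hx1
      · exact hx2
    exact same_scale_eq this
  have : anc d p = p' := by rw [hq, heq]
  rw [← this]; exact hsub

section Omega
variable (Ω : Set ℝ)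

def Qc (p : ℤ × ℤ) : Prop := Icc (c p.1 p.2) (c p.1 (p.2+1)) ⊆ Ω

def Mx (p : ℤ × ℤ) : Prop := Qc Ω p ∧ ¬ Qc Ω (par p)

variable {Ω}

lemma dy_subset_Omega {p : ℤ × ℤ} (hp : Qc Ω p) : dy p ⊆ Ω :=
  Ico_subset_Icc_self.trans hp

lemma exists_max (hΩ : volume Ω ≠ ⊤) {p : ℤ × ℤ} (hQ : Qc Ω p) :
    ∃ s : ℕ, Mx Ω (anc s p) ∧ dy p ⊆ dy (anc s p) := by
  classical
  have hex : ∃ s : ℕ, ¬ Qc Ω (anc s p) := by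
    by_contra hcon
    push_neg at hcon
    have hb : ∀ s : ℕ, (2:ℝ)^(p.1 + (s:ℤ)) ≤ (volume Ω).toReal := by
      intro s
      have h1 := measure_mono (μ := (volume : Measure ℝ)) (hcon s)
      rw [Real.volume_Icc] at h1
      have h2 : c (anc s p).1 ((anc s p).2+1) - c (anc s p).1 (anc s p).2
          = (2:ℝ)^(p.1 + (s:ℤ)) := by
        rw [c_sub, anc_fst]; push_cast; ring
      rw [h2] at h1
      exact (ENNReal.ofReal_le_iff_le_toReal hΩ).1 h1
    obtain ⟨s, hs⟩ := pow_unbounded_of_one_lt ((volume Ω).toReal / (2:ℝ)^p.1) one_lt_two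
    have h3 : (volume Ω).toReal < (2:ℝ)^(p.1 + (s:ℤ)) := by
      rw [zpow_add₀ (by norm_num : (2:ℝ) ≠ 0), zpow_natCast]
      have h4 : (volume Ω).toReal / (2:ℝ)^p.1 * (2:ℝ)^p.1 < 2^s * (2:ℝ)^p.1 :=
        mul_lt_mul_of_pos_right hs (two_zpow_pos p.1)
      rw [div_mul_cancel₀ _ (two_zpow_pos p.1).ne'] at h4
      linarith [h4]
    exact absurd (hb s) (not_le.2 h3)
  have h0 : Qc Ω (anc 0 p) := hQ
  have hfind : 0 < Nat.find hex := by
    rcases Nat.eq_zero_or_pos (Nat.find hex) with h | h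
    · exact absurd h0 (h ▸ Nat.find_spec hex)
    · exact h
  refine ⟨Nat.find hex - 1, ⟨?_, ?_⟩, dy_subset_anc _ p⟩
  · by_contra hcon
    exact (Nat.find_min hex (show Nat.find hex - 1 < Nat.find hex by omega)) hcon
  · have : par (anc (Nat.find hex - 1) p) = anc (Nat.find hex) p := by
      conv_rhs => rw [show Nat.find hex = (Nat.find hex - 1) + 1 by omega]
      simp [anc]
    rw [this]
    exact Nat.find_spec hex

lemma mx_disj_aux {p p' : ℤ × ℤ} (h1 : Mx Ω p) (h2 : Mx Ω p') (hk : p.1 ≤ p'.1)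
    (hne : p ≠ p') (hint : (dy p ∩ dy p').Nonempty) : False := by
  rcases eq_or_lt_of_le hk with heq | hlt
  · have hmm : p.2 = p'.2 := by
      apply same_scale_eq (k := p.1) (m := p.2) (m' := p'.2)
      have : dy (p.1, p'.2) = dy p' := by rw [show (p.1, p'.2) = p' from by rw [heq]]
      rw [this]
      exact hint
    exact hne (Prod.ext heq hmm)
  · have hsub : dy p ⊆ dy p' := nested hk hint
    obtain ⟨x, hx⟩ := dy_nonempty p
    have hsub2 : dy (par p) ⊆ dy p' := by
      apply nested (show (par p).1 ≤ p'.1 from by simp only [par]; omega)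
      exact ⟨x, dy_subset_par p hx, hsub hx⟩
    have hii := (Ico_subset_Ico_iff (c_lt _ (by omega))).1 hsub2
    exact h1.2 ((Icc_subset_Icc hii.1 hii.2).trans h2.1)

lemma mx_pairwise_disjoint :
    Pairwise (Function.onFun Disjoint (fun i : {p : ℤ × ℤ // Mx Ω p} => dy i.1)) := by
  intro i j hij
  rw [Function.onFun]
  by_contra hnd
  rw [Set.not_disjoint_iff_nonempty_inter] at hnd
  have hne : i.1 ≠ j.1 := fun h => hij (Subtype.ext h)
  rcases le_total i.1.1 j.1.1 with h | h
  · exact mx_disj_aux i.2 j.2 h hne hnd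
  · exact mx_disj_aux j.2 i.2 h hne.symm (inter_comm _ _ ▸ hnd)

lemma tsum_mx_le : ∑' (i : {p : ℤ × ℤ // Mx Ω p}), volume (dy i.1) ≤ volume Ω := by
  rw [← measure_iUnion mx_pairwise_disjoint (fun i => measurableSet_Ico)]
  exact measure_mono (iUnion_subset fun i => dy_subset_Omega i.2.1)

lemma cover {n : ℤ} (hΩ : volume Ω ≠ ⊤) {x : ℝ} {k m : ℤ}
    (hx : x ∈ dy (k, m)) (hQ : Qc Ω (k, m + n)) :
    (∃ p, Mx Ω p ∧ x ∈ Ico (c p.1 (p.2-1)) (c p.1 (p.2+2))) ∨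
    (∃ s : ℕ, s < Nat.log 2 n.natAbs + 1 ∧ ∃ p, Mx Ω p ∧
      x ∈ Ico (c p.1 p.2 - (n:ℝ) * (2:ℝ)^(p.1-(s:ℤ)))
              (c p.1 (p.2+1) - (n:ℝ) * (2:ℝ)^(p.1-(s:ℤ)))) := by
  obtain ⟨s, hMx, hsub⟩ := exists_max hΩ hQ
  set J := anc s (k, m+n) with hJdef
  have hJ1 : J.1 = k + s := anc_fst s _
  have hend := (Ico_subset_Ico_iff (c_lt _ (by omega))).1 hsub
  have e1 : c k m = c k (m+n) - (n:ℝ) * (2:ℝ)^k := by unfold c; push_cast; ring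
  have e2 : c k (m+1) = c k (m+n+1) - (n:ℝ) * (2:ℝ)^k := by unfold c; push_cast; ring
  have hxl : c k (m+n) - (n:ℝ) * (2:ℝ)^k ≤ x := e1 ▸ hx.1
  have hxu : x < c k (m+n+1) - (n:ℝ) * (2:ℝ)^k := e2 ▸ hx.2
  have h2k : (0:ℝ) < (2:ℝ)^k := two_zpow_pos k
  by_cases hc : n.natAbs ≤ 2^s
  · left
    refine ⟨J, hMx, ?_, ?_⟩
    · have habs : |(n:ℝ)| * (2:ℝ)^k ≤ (2:ℝ)^J.1 := by
        have h5 : |(n:ℝ)| ≤ (2:ℝ)^(s:ℕ) := by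
          rw [show |(n:ℝ)| = ((n.natAbs : ℝ)) from by rw [Nat.cast_natAbs]; push_cast; ring]
          exact_mod_cast hc
        calc |(n:ℝ)| * (2:ℝ)^k ≤ (2:ℝ)^(s:ℕ) * (2:ℝ)^k :=
              mul_le_mul_of_nonneg_right h5 h2k.le
          _ = (2:ℝ)^J.1 := by
              rw [hJ1, zpow_add₀ (by norm_num : (2:ℝ) ≠ 0), zpow_natCast]; ring
      have hn1 : (n:ℝ) * (2:ℝ)^k ≤ |(n:ℝ)| * (2:ℝ)^k :=
        mul_le_mul_of_nonneg_right (le_abs_self _) h2k.le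
      have emJ : c J.1 (J.2-1) = c J.1 J.2 - (2:ℝ)^J.1 := by unfold c; push_cast; ring
      rw [emJ]
      linarith [hend.1]
    · have habs : |(n:ℝ)| * (2:ℝ)^k ≤ (2:ℝ)^J.1 := by
        have h5 : |(n:ℝ)| ≤ (2:ℝ)^(s:ℕ) := by
          rw [show |(n:ℝ)| = ((n.natAbs : ℝ)) from by rw [Nat.cast_natAbs]; push_cast; ring]
          exact_mod_cast hc
        calc |(n:ℝ)| * (2:ℝ)^k ≤ (2:ℝ)^(s:ℕ) * (2:ℝ)^k :=
              mul_le_mul_of_nonneg_right h5 h2k.le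
          _ = (2:ℝ)^J.1 := by
              rw [hJ1, zpow_add₀ (by norm_num : (2:ℝ) ≠ 0), zpow_natCast]; ring
      have hn2 : (-(n:ℝ)) * (2:ℝ)^k ≤ |(n:ℝ)| * (2:ℝ)^k :=
        mul_le_mul_of_nonneg_right (neg_le_abs _) h2k.le
      have epJ : c J.1 (J.2+2) = c J.1 (J.2+1) + (2:ℝ)^J.1 := by unfold c; push_cast; ring
      rw [epJ]
      linarith [hend.2]
  · right
    push_neg at hc
    have hs0 : s ≤ Nat.log 2 n.natAbs :=
      (Nat.le_log_iff_pow_le one_lt_two (lt_of_le_of_lt (Nat.zero_le _) hc).ne').2 hc.le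
    refine ⟨s, by omega, J, hMx, ?_, ?_⟩
    · have hk' : (2:ℝ)^(J.1 - (s:ℤ)) = (2:ℝ)^k := by rw [hJ1]; ring_nf
      rw [hk']
      linarith [hend.1]
    · have hk' : (2:ℝ)^(J.1 - (s:ℤ)) = (2:ℝ)^k := by rw [hJ1]; ring_nf
      rw [hk']
      linarith [hend.2]

end Omega

end Stmt7

open Stmt7 in
/-- There is an absolute constant `C` such that for every `n ∈ ℤ`,
`f ∈ L¹(ℝ)` and `λ > 0`: `|{M̃^n f > λ}| ≤ C log₂(2+|n|) |{Mf > λ}|`. -/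
theorem stmt_7 :
    ∃ C : ℝ, 0 < C ∧ ∀ (n : ℤ) (f : ℝ → ℂ), Integrable f →
      ∀ lam : ℝ, 0 < lam →
        volume {x : ℝ | ENNReal.ofReal lam < sharpShiftedMax n f x} ≤
          ENNReal.ofReal (C * Real.logb 2 (2 + |(n:ℝ)|)) *
            volume {x : ℝ | ENNReal.ofReal lam < hlMax f x} := by
  refine ⟨5, by norm_num, ?_⟩
  intro n f _ lam hlam
  set Ω : Set ℝ := {x : ℝ | ENNReal.ofReal lam < hlMax f x} with hΩdef
  have hlogb : (1:ℝ) ≤ Real.logb 2 (2 + |(n:ℝ)|) := by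
    rw [show (1:ℝ) = Real.logb 2 2 from (Real.logb_self_eq_one (by norm_num)).symm]
    exact Real.logb_le_logb_of_le one_lt_two (by norm_num) (by linarith [abs_nonneg ((n:ℝ))])
  by_cases hΩ : volume Ω = ⊤
  · rw [hΩ, ENNReal.mul_top]
    · exact le_top
    · simp only [ne_eq, ENNReal.ofReal_eq_zero, not_le]
      linarith
  · -- main case
    set s₀ : ℕ := Nat.log 2 n.natAbs + 1 with hs₀def
    set T : Set ℝ := ⋃ i : {p : ℤ × ℤ // Mx Ω p}, Ico (c i.1.1 (i.1.2-1)) (c i.1.1 (i.1.2+2))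
      with hTdef
    set Sh : ℕ → Set ℝ := fun s => ⋃ i : {p : ℤ × ℤ // Mx Ω p},
      Ico (c i.1.1 i.1.2 - (n:ℝ) * (2:ℝ)^(i.1.1-(s:ℤ)))
          (c i.1.1 (i.1.2+1) - (n:ℝ) * (2:ℝ)^(i.1.1-(s:ℤ))) with hShdef
    have hsub : {x : ℝ | ENNReal.ofReal lam < sharpShiftedMax n f x}
        ⊆ T ∪ ⋃ s ∈ Finset.range s₀, Sh s := by
      intro x hx
      simp only [mem_setOf_eq, sharpShiftedMax, lt_iSup_iff] at hx
      obtain ⟨k, m, hxI, hlt⟩ := hx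
      have hxI' : x ∈ dy (k, m) := by
        simp only [dy, c]
        constructor
        · exact_mod_cast hxI.1
        · have := hxI.2; push_cast; exact_mod_cast this
      have hQ : Qc Ω (k, m+n) := by
        intro y hy
        have hy' : y ∈ Icc ((2:ℝ)^k * ((m:ℝ)+(n:ℝ))) ((2:ℝ)^k * ((m:ℝ)+(n:ℝ)+1)) := by
          have h1 := hy.1
          have h2 := hy.2
          simp only [c] at h1 h2
          push_cast at h1 h2
          exact ⟨h1, h2⟩
        have h2k : (0:ℝ) < (2:ℝ)^k := two_zpow_pos k
        have hab : (2:ℝ)^k * ((m:ℝ)+(n:ℝ)) < (2:ℝ)^k * ((m:ℝ)+(n:ℝ)+1) := by nlinarith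
        show ENNReal.ofReal lam < hlMax f y
        have key : ENNReal.ofReal ((2:ℝ)^(-k)) *
            (∫⁻ z in Ico ((2:ℝ)^k * ((m:ℝ)+(n:ℝ))) ((2:ℝ)^k * ((m:ℝ)+(n:ℝ)+1)),
              (‖f z‖₊ : ℝ≥0∞)) ≤ hlMax f y := by
          have h1 : ENNReal.ofReal ((2:ℝ)^(-k)) *
              (∫⁻ z in Ico ((2:ℝ)^k * ((m:ℝ)+(n:ℝ))) ((2:ℝ)^k * ((m:ℝ)+(n:ℝ)+1)),
                (‖f z‖₊ : ℝ≥0∞)) ≤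
              ENNReal.ofReal (((2:ℝ)^k * ((m:ℝ)+(n:ℝ)+1) - (2:ℝ)^k * ((m:ℝ)+(n:ℝ)))⁻¹) *
              (∫⁻ z in Icc ((2:ℝ)^k * ((m:ℝ)+(n:ℝ))) ((2:ℝ)^k * ((m:ℝ)+(n:ℝ)+1)),
                (‖f z‖₊ : ℝ≥0∞)) := by
            apply mul_le_mul'
            · apply le_of_eq
              congr 1
              rw [show (2:ℝ)^k * ((m:ℝ)+(n:ℝ)+1) - (2:ℝ)^k * ((m:ℝ)+(n:ℝ)) = (2:ℝ)^k by ring,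
                ← zpow_neg]
            · exact lintegral_mono_set Ico_subset_Icc_self
          refine h1.trans ?_
          rw [hlMax]
          refine le_trans ?_ (le_iSup _ ((2:ℝ)^k * ((m:ℝ)+(n:ℝ))))
          refine le_trans ?_ (le_iSup _ ((2:ℝ)^k * ((m:ℝ)+(n:ℝ)+1)))
          refine le_trans ?_ (le_iSup _ hab)
          exact le_iSup (fun (_ : y ∈ Icc _ _) => _) hy'
        exact lt_of_lt_of_le hlt key
      rcases cover hΩ hxI' hQ with ⟨p, hp, hxp⟩ | ⟨s, hs, p, hp, hxp⟩
      · left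
        exact mem_iUnion.2 ⟨⟨p, hp⟩, hxp⟩
      · right
        exact mem_iUnion₂.2 ⟨s, Finset.mem_range.2 hs, mem_iUnion.2 ⟨⟨p, hp⟩, hxp⟩⟩
    have hkey : ∑' i : {p : ℤ × ℤ // Mx Ω p}, ENNReal.ofReal ((2:ℝ)^i.1.1) ≤ volume Ω := by
      calc ∑' i : {p : ℤ × ℤ // Mx Ω p}, ENNReal.ofReal ((2:ℝ)^i.1.1)
          = ∑' i : {p : ℤ × ℤ // Mx Ω p}, volume (dy i.1) :=
            tsum_congr fun i => (volume_dy i.1).symm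
        _ ≤ volume Ω := tsum_mx_le
    have hT : volume T ≤ 3 * volume Ω := by
      calc volume T ≤ ∑' i : {p : ℤ × ℤ // Mx Ω p},
            volume (Ico (c i.1.1 (i.1.2-1)) (c i.1.1 (i.1.2+2))) := measure_iUnion_le _
        _ = ∑' i : {p : ℤ × ℤ // Mx Ω p}, 3 * ENNReal.ofReal ((2:ℝ)^i.1.1) := by
            refine tsum_congr fun i => ?_
            rw [Real.volume_Ico,
              show c i.1.1 (i.1.2+2) - c i.1.1 (i.1.2-1) = 3 * (2:ℝ)^i.1.1 from by
                rw [c_sub]; push_cast; ring,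
              ENNReal.ofReal_mul (by norm_num)]
            norm_num
        _ = 3 * ∑' i : {p : ℤ × ℤ // Mx Ω p}, ENNReal.ofReal ((2:ℝ)^i.1.1) :=
            ENNReal.tsum_mul_left
        _ ≤ 3 * volume Ω := mul_le_mul_right hkey 3
    have hSh : ∀ s : ℕ, volume (Sh s) ≤ volume Ω := by
      intro s
      calc volume (Sh s) ≤ ∑' i : {p : ℤ × ℤ // Mx Ω p},
            volume (Ico (c i.1.1 i.1.2 - (n:ℝ) * (2:ℝ)^(i.1.1-(s:ℤ)))
              (c i.1.1 (i.1.2+1) - (n:ℝ) * (2:ℝ)^(i.1.1-(s:ℤ)))) := measure_iUnion_le _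
        _ = ∑' i : {p : ℤ × ℤ // Mx Ω p}, ENNReal.ofReal ((2:ℝ)^i.1.1) := by
            refine tsum_congr fun i => ?_
            rw [Real.volume_Ico]
            congr 1
            have := c_sub i.1.1 (i.1.2+1) i.1.2
            push_cast at this
            linarith
        _ ≤ volume Ω := hkey
    have hfinal : volume {x : ℝ | ENNReal.ofReal lam < sharpShiftedMax n f x}
        ≤ (3 + (s₀:ℝ≥0∞)) * volume Ω := by
      calc volume {x : ℝ | ENNReal.ofReal lam < sharpShiftedMax n f x}
          ≤ volume (T ∪ ⋃ s ∈ Finset.range s₀, Sh s) := measure_mono hsub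
        _ ≤ volume T + volume (⋃ s ∈ Finset.range s₀, Sh s) := measure_union_le _ _
        _ ≤ 3 * volume Ω + ∑ s ∈ Finset.range s₀, volume (Sh s) :=
            add_le_add hT (measure_biUnion_finset_le _ _)
        _ ≤ 3 * volume Ω + ∑ _s ∈ Finset.range s₀, volume Ω :=
            add_le_add_right (Finset.sum_le_sum fun s _ => hSh s) _
        _ = 3 * volume Ω + (s₀:ℝ≥0∞) * volume Ω := by
            rw [Finset.sum_const, Finset.card_range, nsmul_eq_mul]
        _ = (3 + (s₀:ℝ≥0∞)) * volume Ω := by ring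
    refine hfinal.trans (mul_le_mul_left ?_ _)
    have hL : ((Nat.log 2 n.natAbs : ℝ)) ≤ Real.logb 2 (2 + |(n:ℝ)|) := by
      rcases Nat.eq_zero_or_pos n.natAbs with h0 | hpos
      · rw [h0]
        simp only [Nat.log_zero_right, Nat.cast_zero]
        linarith
      · have h1 : (2:ℝ)^(Nat.log 2 n.natAbs) ≤ (n.natAbs : ℝ) := by
          exact_mod_cast Nat.pow_log_le_self 2 (by omega)
        have h2 : ((n.natAbs : ℝ)) ≤ 2 + |(n:ℝ)| := by
          rw [show ((n.natAbs : ℝ)) = |(n:ℝ)| from by rw [Nat.cast_natAbs]; push_cast; ring]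
          linarith [abs_nonneg (n:ℝ)]
        calc ((Nat.log 2 n.natAbs : ℝ)) = Real.logb 2 ((2:ℝ)^(Nat.log 2 n.natAbs)) := by
              rw [Real.logb_pow]; simp [Real.logb_self_eq_one]
          _ ≤ Real.logb 2 (2 + |(n:ℝ)|) :=
              Real.logb_le_logb_of_le one_lt_two (by positivity) (le_trans h1 h2)
    have hconv : (3 + (s₀:ℝ≥0∞)) = ENNReal.ofReal (3 + (s₀:ℝ)) := by
      rw [ENNReal.ofReal_add (by norm_num) (by positivity), ENNReal.ofReal_natCast]
      norm_num
    rw [hconv]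
    apply ENNReal.ofReal_le_ofReal
    have hs₀R : (s₀:ℝ) = (Nat.log 2 n.natAbs : ℝ) + 1 := by exact_mod_cast rfl
    rw [hs₀R]
    linarith

end
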